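/- arXiv:1201.2553 — 3 statements merged into one kernel-verified Lean document; each statement's English description precedes it below -/
import Mathlib

section
/- Let α, β, γ be types and let f : α → List Bool → β → γ → List Bool → γ and h : α → List Bool → β → γ → γ satisfy: (i) f x [] b c d = c for all x, b, c, d, and (ii) f x (a ++ [i]) b c d = h x (d ++ List.replicate a.length false) b (f x a b c d) for all x, a, b, c, d and both digits i : Bool. Then for all x, u, t, b, c, w: f x u b (f x t b c w) (w ++ List.replicate t.length false) = f x (t ++ List.replicate u.length false) b c w. -/
/-! Induct on `u` from the right. Appending a digit to `u` appends a zero to `t ⊕ u`, so both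
sides take one `h`-step; the offsets agree because `(w ⊕ t) ⊕ u = w ⊕ (t ⊕ u)`. -/

namespace List

variable {α β : Type*}

theorem append_replicate_append_replicate (w : List α) (a : α) (m n : ℕ) :
    w ++ replicate m a ++ replicate n a = w ++ replicate (m + n) a := by
  rw [append_assoc, replicate_add]

theorem append_replicate_length_concat (t : List α) (a : α) (u : List β) (i : β) :
    t ++ replicate (u ++ [i]).length a = t ++ replicate u.length a ++ [a] := by
  rw [length_append, length_singleton, replicate_succ', append_assoc]

end List

theorem oplus_lemma {α β γ : Type*} (f : α → List Bool → β → γ → List Bool → γ)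
    (h : α → List Bool → β → γ → γ)
    (hbase : ∀ x b c d, f x [] b c d = c)
    (hstep : ∀ x (a : List Bool) b c d (i : Bool),
      f x (a ++ [i]) b c d = h x (d ++ List.replicate a.length false) b (f x a b c d)) :
    ∀ x (u t : List Bool) b c (w : List Bool),
      f x u b (f x t b c w) (w ++ List.replicate t.length false)
        = f x (t ++ List.replicate u.length false) b c w := by
  intro x u
  induction u using List.reverseRecOn with
  | nil => intro t b c w; simp [hbase]
  | append_singleton u i ih =>
    intro t b c w
    rw [hstep, ih, List.append_replicate_length_concat, hstep,
      List.append_replicate_append_replicate, List.length_append, List.length_replicate]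
end

section
/- Let α, β, γ be types and let f : α → List Bool → β → γ → List Bool → γ and h : α → List Bool → β → γ → γ satisfy: (i) f x [] b c d = c for all x, b, c, d, and (ii) f x (a ++ [i]) b c d = h x (d ++ List.replicate a.length false) b (f x a b c d) for all x, a, b, c, d and both digits i : Bool. Fix x : α, b : β and m, n : ℕ. Suppose Fq, Fr : List Bool → γ → List Bool → γ satisfy, for all a, c, d: Fq a c d = f x (minW a (List.replicate m false)) b c d and Fr a c d = f x (minW a (List.replicate n false)) b c d. Then for all a, c, d: Fq (List.take (a.length - n) a) (Fr a c d) (d ++ List.replicate n false) = f x (minW a (List.replicate (m + n) false)) b c d, where subtraction of lengths is truncated subtraction on ℕ and minW u v = u if u.length < v.length and minW u v = v otherwise. -/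
def minW (u v : List Bool) : List Bool := if u.length < v.length then u else v

/-! The recursion for `f` reads only the length of the word, never its digits, so every value of
`f` is a value on a word of zeros; on words of zeros, running `f` for `j` steps and then, with the
shifted parameter `d ++ 0^j`, for `k` more steps is the same as running it for `k + j` steps. Both
truncations in the theorem act on lengths through `min`, which reduces the claim to that
additivity. -/

theorem length_minW (u v : List Bool) : (minW u v).length = min u.length v.length := by
  unfold minW
  split <;> omega

section

variable {α β γ : Type*} {f : α → List Bool → β → γ → List Bool → γ}
  {h : α → List Bool → β → γ → γ}

theorem eq_replicate_length_of_step
    (hstep : ∀ x (a : List Bool) b c d (i : Bool),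
      f x (a ++ [i]) b c d = h x (d ++ List.replicate a.length false) b (f x a b c d))
    (x : α) (a : List Bool) (b : β) (c : γ) (d : List Bool) :
    f x a b c d = f x (List.replicate a.length false) b c d := by
  induction a using List.reverseRecOn with
  | nil => rfl
  | append_singleton a i ih =>
    rw [List.length_append, List.length_singleton, List.replicate_succ', hstep, hstep, ih,
      List.length_replicate]

theorem replicate_add_of_step (hbase : ∀ x b c d, f x [] b c d = c)
    (hstep : ∀ x (a : List Bool) b c d (i : Bool),
      f x (a ++ [i]) b c d = h x (d ++ List.replicate a.length false) b (f x a b c d))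
    (x : α) (b : β) (c : γ) (d : List Bool) (k j : ℕ) :
    f x (List.replicate k false) b (f x (List.replicate j false) b c d)
        (d ++ List.replicate j false) = f x (List.replicate (k + j) false) b c d := by
  induction k with
  | zero => rw [List.replicate_zero, hbase, Nat.zero_add]
  | succ k ih =>
    rw [List.replicate_succ', Nat.succ_add, List.replicate_succ', hstep, hstep, ih,
      List.length_replicate, List.length_replicate, List.append_assoc, ← List.replicate_add,
      Nat.add_comm j]

end

theorem truncation_addition_case {α β γ : Type*}
    (f : α → List Bool → β → γ → List Bool → γ)
    (h : α → List Bool → β → γ → γ)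
    (hbase : ∀ x b c d, f x [] b c d = c)
    (hstep : ∀ x (a : List Bool) b c d (i : Bool),
      f x (a ++ [i]) b c d = h x (d ++ List.replicate a.length false) b (f x a b c d))
    (x : α) (b : β) (m n : ℕ)
    (Fq Fr : List Bool → γ → List Bool → γ)
    (hFq : ∀ (a : List Bool) (c : γ) (d : List Bool),
      Fq a c d = f x (minW a (List.replicate m false)) b c d)
    (hFr : ∀ (a : List Bool) (c : γ) (d : List Bool),
      Fr a c d = f x (minW a (List.replicate n false)) b c d) :
    ∀ (a : List Bool) (c : γ) (d : List Bool),
      Fq (List.take (a.length - n) a) (Fr a c d) (d ++ List.replicate n false)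
        = f x (minW a (List.replicate (m + n) false)) b c d := by
  intro a c d
  rw [hFq, hFr, eq_replicate_length_of_step hstep _ (minW _ _),
    eq_replicate_length_of_step hstep _ (minW a _), eq_replicate_length_of_step hstep _ (minW a _)]
  simp only [length_minW, List.length_take, List.length_replicate]
  rcases le_or_gt n a.length with hn | hn
  · rw [min_eq_right hn, replicate_add_of_step hbase hstep]
    congr 2
    omega
  · rw [show min (min (a.length - n) a.length) m = 0 by omega, List.replicate_zero, hbase]
    congr 2
    omega
end

section
/- Let α, β, γ be types and let f : α → List Bool → β → γ → List Bool → γ and h : α → List Bool → β → γ → γ satisfy: (i) f x [] b c d = c for all x, b, c, d, and (ii) f x (a ++ [i]) b c d = h x (d ++ List.replicate a.length false) b (f x a b c d) for all x, a, b, c, d and both digits i : Bool. Fix x : α, b : β and m : ℕ, and suppose F : List Bool → γ → List Bool → γ satisfies, for all a, c, d: F a c d = f x (minW a (List.replicate m false)) b c d. Suppose G : List Bool → List Bool → γ → List Bool → γ satisfies: G [] a c d = c, and for both digits i, G (z ++ [i]) a c d = F (List.take (a.length - z.length * m) a) (G z a c d) (d ++ List.replicate (z.length * m) false). Then for all z,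 a, c, d: G z a c d = f x (minW a (List.replicate (z.length * m) false)) b c d, where subtraction is truncated subtraction on ℕ and minW u v = u if u.length < v.length and minW u v = v otherwise. -/
section WordRecursion

variable {γ : Type*} {g : List Bool → γ → List Bool → γ} {H : List Bool → γ → γ}

theorem wordRec_eq_of_length_eq
    (hsnoc : ∀ a c d (i : Bool),
      g (a ++ [i]) c d = H (d ++ List.replicate a.length false) (g a c d))
    {w w' : List Bool} (hw : w.length = w'.length) (c : γ) (d : List Bool) :
    g w c d = g w' c d := by
  induction w using List.reverseRecOn generalizing w' with
  | nil => rw [List.eq_nil_of_length_eq_zero hw.symm]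
  | append_singleton w i ih =>
    obtain rfl | ⟨w', j, rfl⟩ := w'.eq_nil_or_concat'
    · simp at hw
    have hlen : w.length = w'.length := by simpa using hw
    rw [hsnoc, hsnoc, ih hlen, hlen]

theorem wordRec_append (hnil : ∀ c d, g [] c d = c)
    (hsnoc : ∀ a c d (i : Bool),
      g (a ++ [i]) c d = H (d ++ List.replicate a.length false) (g a c d))
    (u v : List Bool) (c : γ) (d : List Bool) :
    g (u ++ v) c d = g v (g u c d) (d ++ List.replicate u.length false) := by
  induction v using List.reverseRecOn with
  | nil => rw [List.append_nil, hnil]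
  | append_singleton v i ih =>
    rw [← List.append_assoc, hsnoc, hsnoc, ih, List.length_append, List.replicate_add,
      List.append_assoc]

theorem wordRec_minW_replicate_add (hnil : ∀ c d, g [] c d = c)
    (hsnoc : ∀ a c d (i : Bool),
      g (a ++ [i]) c d = H (d ++ List.replicate a.length false) (g a c d))
    (a : List Bool) (k m : ℕ) (c : γ) (d : List Bool) :
    g (minW (a.take (a.length - k)) (List.replicate m false))
        (g (minW a (List.replicate k false)) c d) (d ++ List.replicate k false)
      = g (minW a (List.replicate (k + m) false)) c d := by
  by_cases hak : a.length ≤ k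
  · have htail : minW (a.take (a.length - k)) (List.replicate m false) = [] := by
      apply List.eq_nil_of_length_eq_zero
      simp only [length_minW, List.length_take, List.length_replicate]
      omega
    rw [htail, hnil]
    exact wordRec_eq_of_length_eq hsnoc
      (by simp only [length_minW, List.length_replicate]; omega) c d
  · have hk : (minW a (List.replicate k false)).length = k := by
      simp only [length_minW, List.length_replicate]
      omega
    have happend := wordRec_append hnil hsnoc (minW a (List.replicate k false))
      (minW (a.take (a.length - k)) (List.replicate m false)) c d
    rw [hk] at happend
    rw [← happend]
    exact wordRec_eq_of_length_eq hsnoc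
      (by simp only [List.length_append, length_minW, List.length_take, List.length_replicate]
          omega) c d

end WordRecursion

theorem truncation_multiplication_claim {α β γ : Type*}
    (f : α → List Bool → β → γ → List Bool → γ)
    (h : α → List Bool → β → γ → γ)
    (hbase : ∀ x b c d, f x [] b c d = c)
    (hstep : ∀ x (a : List Bool) b c d (i : Bool),
      f x (a ++ [i]) b c d = h x (d ++ List.replicate a.length false) b (f x a b c d))
    (x : α) (b : β) (m : ℕ)
    (F : List Bool → γ → List Bool → γ)
    (hF : ∀ (a : List Bool) (c : γ) (d : List Bool),
      F a c d = f x (minW a (List.replicate m false)) b c d)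
    (G : List Bool → List Bool → γ → List Bool → γ)
    (hG0 : ∀ (a : List Bool) (c : γ) (d : List Bool), G [] a c d = c)
    (hGS : ∀ (z : List Bool) (a : List Bool) (c : γ) (d : List Bool) (i : Bool),
      G (z ++ [i]) a c d
        = F (List.take (a.length - z.length * m) a) (G z a c d)
            (d ++ List.replicate (z.length * m) false)) :
    ∀ (z a : List Bool) (c : γ) (d : List Bool),
      G z a c d = f x (minW a (List.replicate (z.length * m) false)) b c d := by
  intro z
  induction z using List.reverseRecOn with
  | nil =>
    intro a c d
    rw [hG0, List.length_nil, zero_mul, List.replicate_zero, minW, List.length_nil,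
      if_neg (Nat.not_lt_zero _), hbase]
  | append_singleton z i ih =>
    intro a c d
    rw [hGS, hF, ih, List.length_append, List.length_singleton, add_one_mul]
    exact wordRec_minW_replicate_add (g := fun a c d => f x a b c d) (H := fun d c => h x d b c)
      (hbase x b) (hstep x · b) a _ m c d
end
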